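/- (Performance difference bound, lower form.) For any two policies π, π' on a finite MDP and any bounded f : S → ℝ, define T_{π,f}(π') := E_{s∼d^π, a∼π, s'∼P}[ (π'(a|s)/π(a|s) − 1)·(R(s,a) + γ f(s') − f(s)) ] and ε_f^{π'} := max_s |E_{a∼π', s'∼P}[R(s,a) + γ f(s') − f(s)]|. Then J(π') − J(π) ≥ (1/(1−γ)) ( T_{π,f}(π') − 2 ε_f^{π'} D_TV(d^{π'} ∥ d^π) ). -/

import Mathlib

open Finset

/-- ℙ(s_t = s | π, ρ0, P): time-indexed state distribution of a finite MDP. -/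
noncomputable def visit {S A : Type*} [Fintype S] [Fintype A]
    (ρ0 : S → ℝ) (π : S → A → ℝ) (P : S → A → S → ℝ) : ℕ → S → ℝ
  | 0 => ρ0
  | (t + 1) => fun s' => ∑ s, ∑ a, visit ρ0 π P t s * π s a * P s a s'

/-- Discounted future state distribution d^π(s) = (1−γ) Σ_t γ^t ℙ(s_t = s | π). -/
noncomputable def dvisit {S A : Type*} [Fintype S] [Fintype A]
    (ρ0 : S → ℝ) (π : S → A → ℝ) (P : S → A → S → ℝ) (γ : ℝ) (s : S) : ℝ :=
  (1 - γ) * ∑' t : ℕ, γ ^ t * visit ρ0 π P t s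

/-- Expected discounted return J(π) = E_τ[Σ_t γ^t R(s_t,a_t)]. -/
noncomputable def Jret {S A : Type*} [Fintype S] [Fintype A]
    (ρ0 : S → ℝ) (π : S → A → ℝ) (P : S → A → S → ℝ) (R : S → A → ℝ) (γ : ℝ) : ℝ :=
  ∑' t : ℕ, γ ^ t * ∑ s, ∑ a, visit ρ0 π P t s * π s a * R s a

/-!
Telescoping `∑ₜ γᵗ (γ f(sₜ₊₁) - f(sₜ)) = -f(s₀)` along the chain of `π` gives, for every `f`,
`J(π) = E_{ρ₀}[f] + (1 - γ)⁻¹ E_{d^π}[δ^π_f]`, where `δ^π_f` is the Bellman residual of `f` under `π`.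
Importance weighting turns `T_{π,f}(π')` into `E_{d^π}[δ^{π'}_f - δ^π_f]`, so
`(1 - γ)(J(π') - J(π)) - T_{π,f}(π') = E_{d^{π'}}[δ^{π'}_f] - E_{d^π}[δ^{π'}_f]`,
which is at least `-‖δ^{π'}_f‖_∞ ‖d^{π'} - d^π‖₁`.
-/

noncomputable def bellmanResidual {S A : Type*} [Fintype S] [Fintype A]
    (π : S → A → ℝ) (P : S → A → S → ℝ) (R : S → A → ℝ) (γ : ℝ) (f : S → ℝ) (s : S) : ℝ :=
  ∑ a, π s a * ∑ s', P s a s' * (R s a + γ * f s' - f s)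

theorem hasSum_pow_mul_telescope {γ : ℝ} {u : ℕ → ℝ} (hu : Summable fun t => γ ^ t * u t) :
    HasSum (fun t => γ ^ t * (γ * u (t + 1) - u t)) (-u 0) := by
  have hu' : Summable fun t => γ ^ (t + 1) * u (t + 1) := (summable_nat_add_iff 1).mpr hu
  have hsum := hu'.hasSum.sub hu.hasSum
  rw [hu.tsum_eq_zero_add, pow_zero, one_mul, sub_add_cancel_right] at hsum
  have hterm : (fun t => γ ^ t * (γ * u (t + 1) - u t)) =
      fun t => γ ^ (t + 1) * u (t + 1) - γ ^ t * u t := funext fun t => by ring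
  rw [hterm]
  exact hsum

theorem sum_mul_le_sum_mul_add_mul_sum_abs_sub {ι : Type*} (s : Finset ι) {d d' g : ι → ℝ}
    {E : ℝ} (hg : ∀ i ∈ s, |g i| ≤ E) :
    ∑ i ∈ s, d i * g i ≤ ∑ i ∈ s, d' i * g i + E * ∑ i ∈ s, |d' i - d i| := by
  rw [Finset.mul_sum, ← Finset.sum_add_distrib]
  refine Finset.sum_le_sum fun i hi => ?_
  have h : |(d' i - d i) * g i| ≤ E * |d' i - d i| := by
    rw [abs_mul, mul_comm E]
    exact mul_le_mul_of_nonneg_left (hg i hi) (abs_nonneg _)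
  linarith [neg_abs_le ((d' i - d i) * g i)]

theorem sum_mul_div_sub_one_mul {ι : Type*} (s : Finset ι) {w w' g : ι → ℝ}
    (hw : ∀ i ∈ s, w i = 0 → w' i = 0) :
    ∑ i ∈ s, w i * ((w' i / w i - 1) * g i) = ∑ i ∈ s, w' i * g i - ∑ i ∈ s, w i * g i := by
  rw [← Finset.sum_sub_distrib]
  refine Finset.sum_congr rfl fun i hi => ?_
  by_cases h : w i = 0
  · simp [h, hw i hi h]
  · field_simp

section MarkovChain

variable {S A : Type*} [Fintype S] [Fintype A] {ρ0 : S → ℝ} {π : S → A → ℝ}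
  {P : S → A → S → ℝ}

theorem sum_visit_succ_mul (g : S → ℝ) (t : ℕ) :
    ∑ s, visit ρ0 π P (t + 1) s * g s =
      ∑ s, visit ρ0 π P t s * ∑ a, π s a * ∑ s', P s a s' * g s' := by
  simp only [visit, Finset.sum_mul, Finset.mul_sum]
  rw [Finset.sum_comm]
  refine Finset.sum_congr rfl fun s _ => ?_
  rw [Finset.sum_comm]
  simp only [mul_assoc]

theorem visit_nonneg (hρ0 : ∀ s, 0 ≤ ρ0 s) (hπ0 : ∀ s a, 0 ≤ π s a)
    (hP0 : ∀ s a s', 0 ≤ P s a s') (t : ℕ) (s : S) : 0 ≤ visit ρ0 π P t s := by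
  induction t generalizing s with
  | zero => exact hρ0 s
  | succ t ih =>
    exact Finset.sum_nonneg fun s _ => Finset.sum_nonneg fun a _ =>
      mul_nonneg (mul_nonneg (ih s) (hπ0 s a)) (hP0 s a _)

theorem sum_visit (hρ1 : ∑ s, ρ0 s = 1) (hπ1 : ∀ s, ∑ a, π s a = 1)
    (hP1 : ∀ s a, ∑ s', P s a s' = 1) (t : ℕ) : ∑ s, visit ρ0 π P t s = 1 := by
  induction t with
  | zero => exact hρ1
  | succ t ih =>
    simpa [hP1, hπ1, ih] using sum_visit_succ_mul (ρ0 := ρ0) (π := π) (P := P) (fun _ => 1) t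

theorem summable_pow_mul_visit {γ : ℝ} (hγ0 : 0 ≤ γ) (hγ1 : γ < 1)
    (hρ0 : ∀ s, 0 ≤ ρ0 s) (hρ1 : ∑ s, ρ0 s = 1)
    (hπ0 : ∀ s a, 0 ≤ π s a) (hπ1 : ∀ s, ∑ a, π s a = 1)
    (hP0 : ∀ s a s', 0 ≤ P s a s') (hP1 : ∀ s a, ∑ s', P s a s' = 1) (s : S) :
    Summable fun t => γ ^ t * visit ρ0 π P t s := by
  have hvisit := visit_nonneg hρ0 hπ0 hP0
  refine (summable_geometric_of_lt_one hγ0 hγ1).of_nonneg_of_le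
    (fun t => mul_nonneg (pow_nonneg hγ0 t) (hvisit t s)) fun t => ?_
  refine mul_le_of_le_one_right (pow_nonneg hγ0 t) ?_
  rw [← sum_visit hρ1 hπ1 hP1 t]
  exact Finset.single_le_sum (fun s _ => hvisit t s) (Finset.mem_univ s)

theorem sum_dvisit_mul {γ : ℝ} (hsum : ∀ s, Summable fun t => γ ^ t * visit ρ0 π P t s)
    (g : S → ℝ) :
    ∑ s, dvisit ρ0 π P γ s * g s = (1 - γ) * ∑' t, γ ^ t * ∑ s, visit ρ0 π P t s * g s := by
  simp only [dvisit, mul_assoc, ← tsum_mul_right, ← Finset.mul_sum]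
  rw [← Summable.tsum_finsetSum fun s _ => by simpa only [mul_assoc] using (hsum s).mul_right (g s)]
  simp only [Finset.mul_sum]

theorem bellmanResidual_eq (hπ1 : ∀ s, ∑ a, π s a = 1) (hP1 : ∀ s a, ∑ s', P s a s' = 1)
    (R : S → A → ℝ) (γ : ℝ) (f : S → ℝ) (s : S) :
    bellmanResidual π P R γ f s =
      ∑ a, π s a * R s a + γ * ∑ a, π s a * ∑ s', P s a s' * f s' - f s := by
  have hinner : ∀ a, ∑ s', P s a s' * (R s a + γ * f s' - f s) =
      R s a + γ * ∑ s', P s a s' * f s' - f s := fun a => by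
    simp only [mul_sub, mul_add, Finset.sum_sub_distrib, Finset.sum_add_distrib, ← Finset.sum_mul,
      hP1, Finset.mul_sum, mul_left_comm γ]
    ring
  simp only [bellmanResidual, hinner]
  simp only [mul_sub, mul_add, Finset.sum_sub_distrib, Finset.sum_add_distrib, ← Finset.sum_mul,
    hπ1, Finset.mul_sum, mul_left_comm γ]
  ring

theorem sum_visit_mul_bellmanResidual (hπ1 : ∀ s, ∑ a, π s a = 1)
    (hP1 : ∀ s a, ∑ s', P s a s' = 1) (R : S → A → ℝ) (γ : ℝ) (f : S → ℝ) (t : ℕ) :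
    ∑ s, visit ρ0 π P t s * bellmanResidual π P R γ f s =
      ∑ s, visit ρ0 π P t s * ∑ a, π s a * R s a + γ * ∑ s, visit ρ0 π P (t + 1) s * f s
        - ∑ s, visit ρ0 π P t s * f s := by
  rw [sum_visit_succ_mul]
  simp only [bellmanResidual_eq hπ1 hP1, mul_sub, mul_add, Finset.sum_sub_distrib,
    Finset.sum_add_distrib, Finset.mul_sum, mul_left_comm _ γ]

theorem sum_dvisit_mul_bellmanResidual {γ : ℝ} (hγ0 : 0 ≤ γ) (hγ1 : γ < 1)
    (hρ0 : ∀ s, 0 ≤ ρ0 s) (hρ1 : ∑ s, ρ0 s = 1)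
    (hπ0 : ∀ s a, 0 ≤ π s a) (hπ1 : ∀ s, ∑ a, π s a = 1)
    (hP0 : ∀ s a s', 0 ≤ P s a s') (hP1 : ∀ s a, ∑ s', P s a s' = 1)
    (R : S → A → ℝ) (f : S → ℝ) :
    ∑ s, dvisit ρ0 π P γ s * bellmanResidual π P R γ f s =
      (1 - γ) * (Jret ρ0 π P R γ - ∑ s, ρ0 s * f s) := by
  have hsum := summable_pow_mul_visit hγ0 hγ1 hρ0 hρ1 hπ0 hπ1 hP0 hP1
  have hsum_mul : ∀ g : S → ℝ, Summable fun t => γ ^ t * ∑ s, visit ρ0 π P t s * g s :=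
    fun g => by simpa only [Finset.mul_sum, mul_assoc] using
      summable_sum fun s _ => (hsum s).mul_right (g s)
  have hJ : Jret ρ0 π P R γ = ∑' t, γ ^ t * ∑ s, visit ρ0 π P t s * ∑ a, π s a * R s a :=
    tsum_congr fun t => by simp only [Finset.mul_sum, mul_assoc]
  rw [sum_dvisit_mul hsum, hJ]
  congr 1
  calc ∑' t, γ ^ t * ∑ s, visit ρ0 π P t s * bellmanResidual π P R γ f s
      = ∑' t, (γ ^ t * ∑ s, visit ρ0 π P t s * ∑ a, π s a * R s a
          + γ ^ t * (γ * ∑ s, visit ρ0 π P (t + 1) s * f s - ∑ s, visit ρ0 π P t s * f s)) :=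
        tsum_congr fun t => by rw [sum_visit_mul_bellmanResidual hπ1 hP1]; ring
    _ = ∑' t, γ ^ t * ∑ s, visit ρ0 π P t s * ∑ a, π s a * R s a - ∑ s, ρ0 s * f s := by
        rw [((hsum_mul _).hasSum.add (hasSum_pow_mul_telescope (hsum_mul f))).tsum_eq]
        rfl

end MarkovChain

theorem performance_difference_lower_bound_general {S A : Type*} [Fintype S] [Fintype A]
    (ρ0 : S → ℝ) (π π' : S → A → ℝ) (P : S → A → S → ℝ) (R : S → A → ℝ)
    (γ : ℝ) (f : S → ℝ)
    (hγ0 : 0 ≤ γ) (hγ1 : γ < 1)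
    (hρ0 : ∀ s, 0 ≤ ρ0 s) (hρ1 : ∑ s, ρ0 s = 1)
    (hπ0 : ∀ s a, 0 ≤ π s a) (hπ1 : ∀ s, ∑ a, π s a = 1)
    (hπ'0 : ∀ s a, 0 ≤ π' s a) (hπ'1 : ∀ s, ∑ a, π' s a = 1)
    (hP0 : ∀ s a s', 0 ≤ P s a s') (hP1 : ∀ s a, ∑ s', P s a s' = 1)
    (hsupp : ∀ s a, 0 < π' s a → 0 < π s a) :
    Jret ρ0 π' P R γ - Jret ρ0 π P R γ
      ≥ (1 / (1 - γ)) *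
        ((∑ s, dvisit ρ0 π P γ s * ∑ a, π s a * ∑ s', P s a s' *
            ((π' s a / π s a - 1) * (R s a + γ * f s' - f s)))
          - 2 * (⨆ s, |∑ a, π' s a * ∑ s', P s a s' * (R s a + γ * f s' - f s)|) *
            ((1 / 2) * ∑ s, |dvisit ρ0 π' P γ s - dvisit ρ0 π P γ s|)) := by
  have hJ := sum_dvisit_mul_bellmanResidual hγ0 hγ1 hρ0 hρ1 hπ0 hπ1 hP0 hP1 R f
  have hJ' := sum_dvisit_mul_bellmanResidual hγ0 hγ1 hρ0 hρ1 hπ'0 hπ'1 hP0 hP1 R f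
  have hsurrogate : ∀ s, ∑ a, π s a * ∑ s', P s a s' *
      ((π' s a / π s a - 1) * (R s a + γ * f s' - f s)) =
        bellmanResidual π' P R γ f s - bellmanResidual π P R γ f s := fun s => by
    simp only [mul_left_comm (P s _ _), ← Finset.mul_sum]
    exact sum_mul_div_sub_one_mul _ fun a _ h =>
      le_antisymm (not_lt.1 fun hpos => (hsupp s a hpos).ne' h) (hπ'0 s a)
  have hTV := sum_mul_le_sum_mul_add_mul_sum_abs_sub Finset.univ
    (d := dvisit ρ0 π P γ) (d' := dvisit ρ0 π' P γ) fun s _ =>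
      le_ciSup (Set.finite_range fun s => |bellmanResidual π' P R γ f s|).bddAbove s
  have hγ : 0 < 1 - γ := sub_pos.2 hγ1
  simp only [hsurrogate, ge_iff_le]
  calc 1 / (1 - γ) * (∑ s, dvisit ρ0 π P γ s *
          (bellmanResidual π' P R γ f s - bellmanResidual π P R γ f s)
        - 2 * (⨆ s, |bellmanResidual π' P R γ f s|) *
          (1 / 2 * ∑ s, |dvisit ρ0 π' P γ s - dvisit ρ0 π P γ s|))
      ≤ 1 / (1 - γ) * (∑ s, dvisit ρ0 π' P γ s * bellmanResidual π' P R γ f s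
          - ∑ s, dvisit ρ0 π P γ s * bellmanResidual π P R γ f s) := by
        refine mul_le_mul_of_nonneg_left ?_ (one_div_pos.2 hγ).le
        simp only [mul_sub, Finset.sum_sub_distrib]
        linarith
    _ = Jret ρ0 π' P R γ - Jret ρ0 π P R γ := by
        rw [hJ, hJ']
        field_simp
        ring

/-- Performance difference bound, lower form:
J(π') − J(π) ≥ (1/(1−γ)) ( T_{π,f}(π') − 2 ε_f^{π'} D_TV(d^{π'}∥d^π) ). -/
theorem performance_difference_lower_bound {S A : Type*} [Fintype S] [Fintype A] [Nonempty S]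
    (ρ0 : S → ℝ) (π π' : S → A → ℝ) (P : S → A → S → ℝ) (R : S → A → ℝ)
    (γ : ℝ) (f : S → ℝ)
    (hγ0 : 0 ≤ γ) (hγ1 : γ < 1)
    (hρ0 : ∀ s, 0 ≤ ρ0 s) (hρ1 : ∑ s, ρ0 s = 1)
    (hπ0 : ∀ s a, 0 ≤ π s a) (hπ1 : ∀ s, ∑ a, π s a = 1)
    (hπ'0 : ∀ s a, 0 ≤ π' s a) (hπ'1 : ∀ s, ∑ a, π' s a = 1)
    (hP0 : ∀ s a s', 0 ≤ P s a s') (hP1 : ∀ s a, ∑ s', P s a s' = 1)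
    (hsupp : ∀ s a, 0 < π' s a → 0 < π s a) :
    Jret ρ0 π' P R γ - Jret ρ0 π P R γ
      ≥ (1 / (1 - γ)) *
        ((∑ s, dvisit ρ0 π P γ s * ∑ a, π s a * ∑ s', P s a s' *
            ((π' s a / π s a - 1) * (R s a + γ * f s' - f s)))
          - 2 * (⨆ s, |∑ a, π' s a * ∑ s', P s a s' * (R s a + γ * f s' - f s)|) *
            ((1 / 2) * ∑ s, |dvisit ρ0 π' P γ s - dvisit ρ0 π P γ s|)) :=
  performance_difference_lower_bound_general ρ0 π π' P R γ f hγ0 hγ1 hρ0 hρ1 hπ0 hπ1 hπ'0 hπ'1 hP0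
    hP1 hsupp
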